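/- Every André cycle on the ground set [n+2] is of the form (1, a_1, …, a_n, n+2); that is, if τ is a single cycle on [n+2] that is an André cycle, then τ(n+2) = 1. -/

import Mathlib

/-- Maximum of a list of naturals (0 for the empty list). -/
def listMax (l : List ℕ) : ℕ := l.foldr max 0

/-- André permutations (words of distinct positive integers), defined recursively:
the empty word and one-letter words are André; a longer word is André iff its minimum
letter `m` splits it as `l ++ m :: r` with `l`, `r` André and `max l < max r`. -/
inductive IsAndre : List ℕ → Prop
  | nil : IsAndre []
  | single (a : ℕ) : IsAndre [a]
  | node (l r : List ℕ) (m : ℕ) : IsAndre l → IsAndre r →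
      (∀ x ∈ l ++ r, m < x) → listMax l < listMax r → IsAndre (l ++ m :: r)

/-- A cycle, written as a list starting with its minimum, is an André cycle if the
remaining word is an André permutation. -/
def IsAndreCycleList (c : List ℕ) : Prop :=
  ∃ a t, c = a :: t ∧ (∀ x ∈ t, a < x) ∧ IsAndre t

/-- The cycle of `σ` through `x`, as the list `x, σ x, σ² x, …` of values in `[n]`
(recorded 1-indexed, i.e. shifted by one). -/
noncomputable def permCycleList {m : ℕ} (σ : Equiv.Perm (Fin m)) (x : Fin m) : List ℕ :=
  (List.range (Function.minimalPeriod ⇑σ x)).map fun k => ((σ ^ k) x : ℕ) + 1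

/-- A web permutation: each cycle (written starting at its minimal element) is an
André cycle. -/
def IsWebPerm {m : ℕ} (σ : Equiv.Perm (Fin m)) : Prop :=
  ∀ x : Fin m, (∀ k : ℕ, x ≤ (σ ^ k) x) → IsAndreCycleList (permCycleList σ x)

/-- An André cycle on the full ground set `[m+1]`: a permutation which is a single
`(m+1)`-cycle and whose cycle (started at the minimum `0`) is an André cycle. -/
def IsFullAndreCycle {m : ℕ} (τ : Equiv.Perm (Fin (m + 1))) : Prop :=
  Function.minimalPeriod ⇑τ 0 = m + 1 ∧ IsAndreCycleList (permCycleList τ 0)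

/-!
The last letter of an André word is its largest letter: the minimum splits the word as
`l ++ m :: r` with `max l < max r`, and inductively the last letter of `r` dominates `r`.
The cycle word of `τ` read from `1` ends with `τ⁻¹ 0 + 1`, and because `τ` is a single
`(n+2)`-cycle the word contains `n + 2`. Hence `τ⁻¹ 0` is the largest element.
-/

open Function

lemma le_listMax {l : List ℕ} {x : ℕ} (hx : x ∈ l) : x ≤ listMax l := by
  induction l with
  | nil => simp at hx
  | cons a t ih =>
    rcases List.mem_cons.mp hx with rfl | hx
    · exact le_max_left _ _
    · exact (ih hx).trans (le_max_right _ _)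

lemma listMax_le {l : List ℕ} {b : ℕ} (h : ∀ x ∈ l, x ≤ b) : listMax l ≤ b := by
  induction l with
  | nil => exact Nat.zero_le _
  | cons a t ih =>
    exact max_le (h a List.mem_cons_self) (ih fun x hx => h x (List.mem_cons_of_mem a hx))

lemma ne_nil_of_listMax_pos {l : List ℕ} (h : 0 < listMax l) : l ≠ [] := by
  rintro rfl
  exact h.ne rfl

theorem IsAndre.le_getLast {t : List ℕ} (ht : IsAndre t) {x : ℕ} (hx : x ∈ t)
    (hne : t ≠ []) :
    x ≤ t.getLast hne := by
  induction ht generalizing x with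
  | nil => exact absurd rfl hne
  | single a => simp_all
  | node l r m _ _ hm hmax _ ihr =>
    have hr : r ≠ [] := ne_nil_of_listMax_pos (Nat.zero_le _ |>.trans_lt hmax)
    rw [List.getLast_append_of_ne_nil _ (List.cons_ne_nil m r), List.getLast_cons hr]
    rcases List.mem_append.mp hx with hx | hx
    · exact (le_listMax hx).trans (hmax.le.trans (listMax_le fun y hy => ihr hy hr))
    · rcases List.mem_cons.mp hx with rfl | hx
      · exact (hm _ (List.mem_append_right l (List.getLast_mem hr))).le
      · exact ihr hx hr

theorem Equiv.Perm.minimalPeriod_pos {α : Type*} [Finite α] (σ : Equiv.Perm α) (x : α) :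
    0 < minimalPeriod σ x :=
  minimalPeriod_pos_of_mem_periodicPts (σ.injective.mem_periodicPts x)

theorem Equiv.Perm.exists_pow_apply_eq_of_minimalPeriod_eq_card {α : Type*} [Fintype α]
    {σ : Equiv.Perm α} {x : α} (h : minimalPeriod σ x = Fintype.card α) (y : α) :
    ∃ k : ℕ, (σ ^ k) x = y := by
  let orbit : Fin (Fintype.card α) → α := fun k => (σ ^ (k : ℕ)) x
  have hinj : Injective orbit := fun i j hij => Fin.ext <|
    iterate_injOn_Iio_minimalPeriod (f := σ) (x := x) (by simp [h]) (by simp [h])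
      (by simpa only [orbit, ← Equiv.Perm.iterate_eq_pow] using hij)
  have hbij : Bijective orbit :=
    (Fintype.bijective_iff_injective_and_card orbit).mpr ⟨hinj, Fintype.card_fin _⟩
  obtain ⟨k, hk⟩ := hbij.2 y
  exact ⟨k, hk⟩

section permCycleList

variable {m : ℕ} (σ : Equiv.Perm (Fin m)) (x : Fin m)

lemma permCycleList_head? : (permCycleList σ x).head? = some ((x : ℕ) + 1) := by
  obtain ⟨p, hp⟩ := Nat.exists_eq_add_one_of_ne_zero (σ.minimalPeriod_pos x).ne'
  simp [permCycleList, hp, List.range_succ_eq_map]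

lemma permCycleList_getLast? : (permCycleList σ x).getLast? = some ((σ.symm x : ℕ) + 1) := by
  obtain ⟨p, hp⟩ := Nat.exists_eq_add_one_of_ne_zero (σ.minimalPeriod_pos x).ne'
  have : (σ ^ p) x = σ.symm x := by
    rw [Equiv.eq_symm_apply, ← Equiv.Perm.mul_apply, ← pow_succ', ← Equiv.Perm.iterate_eq_pow,
      ← hp, iterate_minimalPeriod]
  simp [permCycleList, hp, List.range_succ, this]

lemma pow_apply_add_one_mem_permCycleList (k : ℕ) :
    ((σ ^ k) x : ℕ) + 1 ∈ permCycleList σ x := by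
  refine List.mem_map.mpr ⟨k % minimalPeriod σ x,
    List.mem_range.mpr (Nat.mod_lt _ (σ.minimalPeriod_pos x)), ?_⟩
  rw [← Equiv.Perm.iterate_eq_pow, ← Equiv.Perm.iterate_eq_pow, iterate_mod_minimalPeriod_eq]

end permCycleList

/-- Every André cycle on `[n+2]` has the form `(1, a₁, …, a_n, n+2)`: it maps the
largest element `n+2` to the smallest element `1`. -/
theorem fullAndreCycle_apply_last (n : ℕ) (τ : Equiv.Perm (Fin (n + 2)))
    (h : IsFullAndreCycle τ) :
    τ (Fin.last (n + 1)) = 0 := by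
  obtain ⟨hper, a, t, hc, -, ht⟩ := h
  have ha : a = 1 := by simpa [hc] using permCycleList_head? τ 0
  have hmem : n + 2 ∈ t := by
    obtain ⟨k, hk⟩ := Equiv.Perm.exists_pow_apply_eq_of_minimalPeriod_eq_card
      (hper.trans (Fintype.card_fin _).symm) (Fin.last (n + 1))
    have := pow_apply_add_one_mem_permCycleList τ 0 k
    rw [hk, hc] at this
    simpa [ha] using this
  have hne : t ≠ [] := List.ne_nil_of_mem hmem
  have hlast : t.getLast hne = (τ.symm 0 : ℕ) + 1 := by
    simpa [hc, List.getLast?_cons, List.getLast?_eq_some_getLast hne] using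
      permCycleList_getLast? τ 0
  have hsymm : τ.symm 0 = Fin.last (n + 1) := by
    have hle := ht.le_getLast hmem hne
    have hlt := (τ.symm 0).isLt
    ext; simp only [Fin.val_last]; omega
  rw [← hsymm, Equiv.apply_symm_apply]
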